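/- arXiv:1702.03795 — 4 statements merged into one kernel-verified Lean document; each statement's English description precedes it below -/
import Mathlib

section
/- With E, T, n, τ, g, f₀, f and the averaged interpolants f_τ^k as in the context, the following estimate holds: Σ_{k=1}^n τ · ‖(f_τ^k − f_τ^{k−1})/τ‖² ≤ 2 · ∫_0^T ‖g(s)‖² ds. -/
/-!
On the `k`-th cell the previous average `f_τ^{k-1}` is the average of `t ↦ f (max (t - τ) 0)`
(the shift by `τ`, frozen at `0` on the first cell, where `f_τ^0 = f₀ = f 0`). Hence
`f_τ^k - f_τ^{k-1}` is an average of increments `f t - f s` with `0 ≤ t - s ≤ τ` and both points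
in the window `[max ((k-2)τ) 0, kτ]`, and Cauchy–Schwarz bounds each increment by
`‖f t - f s‖² ≤ τ ∫_window ‖g‖²`. So the `k`-th term of the sum is at most `∫_window ‖g‖²`, and
the windows cover `[0, T]` at most twice.
-/

open MeasureTheory Set

section

variable {E : Type*} [NormedAddCommGroup E]

theorem intervalIntegrable_of_memLp_Ioc {g : ℝ → E} {a b c d : ℝ}
    (hg : MemLp g 2 (volume.restrict (Ioc a b))) (hac : a ≤ c) (hcd : c ≤ d) (hdb : d ≤ b) :
    IntervalIntegrable g volume c d :=
  (intervalIntegrable_iff_integrableOn_Ioc_of_le hcd).2 <|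
    IntegrableOn.mono_set (hg.integrable one_le_two) (Ioc_subset_Ioc hac hdb)

variable [NormedSpace ℝ E]

theorem sq_norm_intervalIntegral_le_mul {g : ℝ → E} {a b : ℝ} (hab : a ≤ b)
    (hg : MemLp g 2 (volume.restrict (Ioc a b))) :
    ‖∫ u in a..b, g u‖ ^ 2 ≤ (b - a) * ∫ u in a..b, ‖g u‖ ^ 2 := by
  rw [intervalIntegral.integral_of_le hab, intervalIntegral.integral_of_le hab]
  rcases hab.eq_or_lt with rfl | hab
  · simp
  have jensen := (convexOn_pow 2).map_set_average_le (continuous_pow 2).continuousOn isClosed_Ici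
    (by simp [hab]) (by simp) (ae_of_all _ fun u => norm_nonneg (g u))
    (hg.integrable one_le_two).norm (hg.integrable_norm_pow two_ne_zero)
  rw [setAverage_eq, setAverage_eq, Real.volume_real_Ioc_of_le hab.le] at jensen
  calc ‖∫ u in Ioc a b, g u‖ ^ 2 ≤ (∫ u in Ioc a b, ‖g u‖) ^ 2 := by
        gcongr; exact norm_integral_le_integral_norm _
    _ ≤ (b - a) * ∫ u in Ioc a b, ‖g u‖ ^ 2 := by
        simp only [smul_eq_mul, mul_pow] at jensen
        rw [inv_pow, ← div_eq_inv_mul, div_le_iff₀ (by positivity)] at jensen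
        refine jensen.trans_eq ?_
        field_simp

theorem sq_norm_intervalIntegral_le_of_sq_norm_le {h : ℝ → E} {a b C : ℝ} (hab : a ≤ b)
    (hC : 0 ≤ C) (hh : ∀ t ∈ Ioc a b, ‖h t‖ ^ 2 ≤ C) :
    ‖∫ t in a..b, h t‖ ^ 2 ≤ (b - a) ^ 2 * C := by
  have hle : ‖∫ t in a..b, h t‖ ≤ √C * |b - a| :=
    intervalIntegral.norm_integral_le_of_norm_le_const fun t ht =>
      Real.le_sqrt_of_sq_le (hh t (uIoc_of_le hab ▸ ht))
  calc ‖∫ t in a..b, h t‖ ^ 2 ≤ (√C * |b - a|) ^ 2 := by gcongr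
    _ = (b - a) ^ 2 * C := by rw [mul_pow, Real.sq_sqrt hC, sq_abs, mul_comm]

theorem sum_intervalIntegral_two_cells_eq {h : ℝ → E} {τ : ℝ} (hτ : 0 ≤ τ) (n : ℕ)
    (hh : IntervalIntegrable h volume 0 (n * τ)) :
    ∑ k ∈ Finset.Icc 1 n, ∫ u in max ((k - 1) * τ - τ) 0..k * τ, h u
      = (∫ u in 0..n * τ, h u) + ∫ u in 0..max ((n - 1) * τ) 0, h u := by
  induction n with
  | zero => simp [hτ]
  | succ n ih =>
    have hm : max (((n + 1 : ℕ) - 1) * τ - τ) 0 = max ((n - 1) * τ) 0 := by push_cast; ring_nf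
    have hmτ : max ((n - 1) * τ) 0 ≤ n * τ := max_le (by nlinarith) (by positivity)
    rw [Finset.sum_Icc_succ_top (by omega), ih (hh.mono_set ?_), hm, add_assoc,
      intervalIntegral.integral_add_adjacent_intervals (hh.mono_set ?_) (hh.mono_set ?_), add_comm]
    · push_cast
      rw [add_sub_cancel_right, max_eq_left (by positivity)]
    all_goals
      refine uIcc_subset_uIcc (mem_uIcc_of_le ?_ ?_) (mem_uIcc_of_le ?_ ?_) <;> push_cast <;>
        nlinarith [le_max_right ((n - 1 : ℝ) * τ) 0]

theorem interpolant_pred_eq_lag_average [CompleteSpace E] {f : ℝ → E} {fτ : ℕ → E} {τ : ℝ} {n k : ℕ}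
    (hτ : 0 < τ) (hfτ0 : fτ 0 = f 0)
    (hfτ : ∀ k : ℕ, 1 ≤ k → k ≤ n →
      fτ k = (1 / τ) • ∫ t in (((k : ℝ) - 1) * τ)..((k : ℝ) * τ), f t)
    (hk1 : 1 ≤ k) (hkn : k ≤ n) :
    fτ (k - 1) = (1 / τ) • ∫ t in ((k : ℝ) - 1) * τ..k * τ, f (max (t - τ) 0) := by
  obtain rfl | hk := hk1.eq_or_lt
  · have hlag : EqOn (fun t => f (max (t - τ) 0)) (fun _ => f 0) (uIcc ((1 - 1) * τ) (1 * τ)) :=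
      fun t ht => by
        rw [uIcc_of_le (by linarith)] at ht
        simp only [max_eq_right (by linarith [ht.2] : t - τ ≤ 0)]
    simp only [Nat.cast_one, intervalIntegral.integral_congr hlag, intervalIntegral.integral_const,
      smul_smul]
    field_simp
    simp [hfτ0]
  · have hlag : EqOn (fun t => f (max (t - τ) 0)) (fun t => f (t - τ))
        (uIcc (((k : ℝ) - 1) * τ) (k * τ)) := fun t ht => by
      have hk2 : (2 : ℝ) ≤ k := by exact_mod_cast hk
      rw [uIcc_of_le (by linarith)] at ht
      simp only [max_eq_left (by nlinarith [ht.1] : 0 ≤ t - τ)]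
    rw [intervalIntegral.integral_congr hlag, intervalIntegral.integral_comp_sub_right,
      hfτ (k - 1) (by omega) (by omega), Nat.cast_sub hk1]
    ring_nf

section Primitive

variable {f g : ℝ → E} {f₀ : E} {T : ℝ}

theorem sub_eq_intervalIntegral_of_eq_add_integral (hf : ∀ t, f t = f₀ + ∫ u in (0 : ℝ)..t, g u)
    {s t : ℝ} (hs : IntervalIntegrable g volume 0 s) (ht : IntervalIntegrable g volume 0 t) :
    f t - f s = ∫ u in s..t, g u := by
  rw [hf, hf, add_sub_add_left_eq_sub, intervalIntegral.integral_interval_sub_left ht hs]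

theorem continuousOn_of_eq_add_integral (hf : ∀ t, f t = f₀ + ∫ u in (0 : ℝ)..t, g u)
    (hg : IntervalIntegrable g volume 0 T) : ContinuousOn f (uIcc 0 T) :=
  (continuousOn_const.add (intervalIntegral.continuousOn_primitive_interval' hg left_mem_uIcc)).congr
    fun t _ => hf t

theorem sq_norm_sub_le_of_eq_add_integral (hf : ∀ t, f t = f₀ + ∫ u in (0 : ℝ)..t, g u)
    (hg : MemLp g 2 (volume.restrict (Ioc 0 T))) {s t : ℝ} (hs : 0 ≤ s) (hst : s ≤ t)
    (ht : t ≤ T) :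
    ‖f t - f s‖ ^ 2 ≤ (t - s) * ∫ u in s..t, ‖g u‖ ^ 2 := by
  rw [sub_eq_intervalIntegral_of_eq_add_integral hf
    (intervalIntegrable_of_memLp_Ioc hg le_rfl hs (hst.trans ht))
    (intervalIntegrable_of_memLp_Ioc hg le_rfl (hs.trans hst) ht)]
  exact sq_norm_intervalIntegral_le_mul hst
    (hg.mono_measure (Measure.restrict_mono (Ioc_subset_Ioc hs ht) le_rfl))

theorem sq_norm_integral_sub_integral_lag_le (hf : ∀ t, f t = f₀ + ∫ u in (0 : ℝ)..t, g u)
    (hg : MemLp g 2 (volume.restrict (Ioc 0 T))) {τ a : ℝ} (hτ : 0 < τ) (ha : 0 ≤ a)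
    (haT : a + τ ≤ T) :
    ‖(∫ t in a..a + τ, f t) - ∫ t in a..a + τ, f (max (t - τ) 0)‖ ^ 2
      ≤ τ ^ 3 * ∫ u in max (a - τ) 0..a + τ, ‖g u‖ ^ 2 := by
  have hT : 0 ≤ T := by linarith
  have hfc : ContinuousOn f (Icc 0 T) := uIcc_of_le hT ▸
    continuousOn_of_eq_add_integral hf (intervalIntegrable_of_memLp_Ioc hg le_rfl hT le_rfl)
  have hsub : uIcc a (a + τ) ⊆ Icc 0 T := by
    rw [uIcc_of_le (by linarith)]; exact Icc_subset_Icc ha haT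
  have hlag : MapsTo (fun t => max (t - τ) 0) (uIcc a (a + τ)) (Icc 0 T) := fun t ht => by
    rw [uIcc_of_le (by linarith)] at ht
    exact ⟨le_max_right _ _, max_le (by linarith [ht.2]) hT⟩
  have hfi : IntervalIntegrable (fun t => f (max (t - τ) 0)) volume a (a + τ) :=
    (hfc.comp (by fun_prop) hlag).intervalIntegrable
  rw [← intervalIntegral.integral_sub (hfc.mono hsub).intervalIntegrable hfi]
  set I := ∫ u in max (a - τ) 0..a + τ, ‖g u‖ ^ 2
  have hgI : IntervalIntegrable (fun u => ‖g u‖ ^ 2) volume (max (a - τ) 0) (a + τ) :=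
    (intervalIntegrable_iff_integrableOn_Ioc_of_le (max_le (by linarith) (by linarith))).2 <|
      IntegrableOn.mono_set (hg.integrable_norm_pow two_ne_zero)
        (Ioc_subset_Ioc (le_max_right _ _) haT)
  have hI : 0 ≤ I := intervalIntegral.integral_nonneg (max_le (by linarith) (by linarith))
    fun u _ => by positivity
  have bound : ∀ t ∈ Ioc a (a + τ), ‖f t - f (max (t - τ) 0)‖ ^ 2 ≤ τ * I := fun t ht => by
    have hlt : max (t - τ) 0 ≤ t := max_le (by linarith) (by linarith [ht.1])
    calc ‖f t - f (max (t - τ) 0)‖ ^ 2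
        ≤ (t - max (t - τ) 0) * ∫ u in max (t - τ) 0..t, ‖g u‖ ^ 2 :=
          sq_norm_sub_le_of_eq_add_integral hf hg (le_max_right _ _) hlt (ht.2.trans haT)
      _ ≤ τ * I := by
          gcongr
          · exact intervalIntegral.integral_nonneg hlt fun u _ => by positivity
          · linarith [le_max_left (t - τ) 0]
          · exact intervalIntegral.integral_mono_interval (max_le_max_right _ (by linarith [ht.1]))
              hlt ht.2 (ae_of_all _ fun u => by positivity) hgI
  calc _ ≤ (a + τ - a) ^ 2 * (τ * I) :=
        sq_norm_intervalIntegral_le_of_sq_norm_le (by linarith) (by positivity) bound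
    _ = τ ^ 3 * I := by ring

theorem interpolant_sq_norm_sub_pred_le [CompleteSpace E]
    (hf : ∀ t, f t = f₀ + ∫ u in (0 : ℝ)..t, g u) (hg : MemLp g 2 (volume.restrict (Ioc 0 T)))
    {fτ : ℕ → E} {τ : ℝ} {n k : ℕ} (hτ : 0 < τ) (hfτ0 : fτ 0 = f₀)
    (hfτ : ∀ k : ℕ, 1 ≤ k → k ≤ n →
      fτ k = (1 / τ) • ∫ t in (((k : ℝ) - 1) * τ)..((k : ℝ) * τ), f t)
    (hk1 : 1 ≤ k) (hkn : k ≤ n) (hkT : k * τ ≤ T) :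
    τ * ‖(1 / τ) • (fτ k - fτ (k - 1))‖ ^ 2 ≤ ∫ u in max ((k - 1) * τ - τ) 0..k * τ, ‖g u‖ ^ 2 := by
  have hkτ : ((k : ℝ) - 1) * τ + τ = k * τ := by ring
  have hk1' : (1 : ℝ) ≤ k := by exact_mod_cast hk1
  have bound := sq_norm_integral_sub_integral_lag_le hf hg hτ (a := (k - 1) * τ)
    (by nlinarith) (hkτ ▸ hkT)
  rw [hkτ] at bound
  rw [hfτ k hk1 hkn, interpolant_pred_eq_lag_average hτ (hfτ0.trans (by simp [hf])) hfτ hk1 hkn,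
    ← smul_sub, smul_smul, norm_smul, mul_pow, Real.norm_of_nonneg (by positivity)]
  calc _ ≤ τ * ((1 / τ * (1 / τ)) ^ 2 *
        (τ ^ 3 * ∫ u in max ((k - 1) * τ - τ) 0..k * τ, ‖g u‖ ^ 2)) := by gcongr
    _ = _ := by field_simp

end Primitive

end

theorem discrete_difference_quotient_estimate_general
    {E : Type*} [NormedAddCommGroup E] [NormedSpace ℝ E] [CompleteSpace E]
    (T : ℝ) (hT : 0 < T) (n : ℕ) (τ : ℝ) (hτ : τ = T / n)
    (g : ℝ → E) (hg_meas : StronglyMeasurable g)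
    (hg_int : IntegrableOn (fun s => ‖g s‖ ^ 2) (Set.Ioc 0 T))
    (f0 : E) (f : ℝ → E) (hf : ∀ t, f t = f0 + ∫ s in (0:ℝ)..t, g s)
    (fτ : ℕ → E) (hfτ0 : fτ 0 = f0)
    (hfτ : ∀ k : ℕ, 1 ≤ k → k ≤ n →
      fτ k = (1 / τ) • ∫ t in (((k : ℝ) - 1) * τ)..((k : ℝ) * τ), f t) :
    ∑ k ∈ Finset.Icc 1 n, τ * ‖(1 / τ) • (fτ k - fτ (k - 1))‖ ^ 2
      ≤ 2 * ∫ s in (0:ℝ)..T, ‖g s‖ ^ 2 := by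
  have hgI : IntervalIntegrable (fun u => ‖g u‖ ^ 2) volume 0 T :=
    (intervalIntegrable_iff_integrableOn_Ioc_of_le hT.le).2 hg_int
  obtain rfl | hn := n.eq_zero_or_pos
  · simpa using intervalIntegral.integral_nonneg hT.le fun s _ => sq_nonneg ‖g s‖
  have hτ0 : 0 < τ := by rw [hτ]; positivity
  have hnτ : n * τ = T := by rw [hτ]; field_simp
  have hg : MemLp g 2 (volume.restrict (Ioc 0 T)) :=
    (memLp_two_iff_integrable_sq_norm hg_meas.aestronglyMeasurable).2 hg_int
  calc ∑ k ∈ Finset.Icc 1 n, τ * ‖(1 / τ) • (fτ k - fτ (k - 1))‖ ^ 2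
      ≤ ∑ k ∈ Finset.Icc 1 n, ∫ u in max ((k - 1) * τ - τ) 0..k * τ, ‖g u‖ ^ 2 :=
        Finset.sum_le_sum fun k hk => by
          obtain ⟨hk1, hkn⟩ := Finset.mem_Icc.1 hk
          exact interpolant_sq_norm_sub_pred_le hf hg hτ0 hfτ0 hfτ hk1 hkn
            (by rw [← hnτ]; gcongr)
    _ = (∫ u in 0..n * τ, ‖g u‖ ^ 2) + ∫ u in 0..max ((n - 1) * τ) 0, ‖g u‖ ^ 2 :=
        sum_intervalIntegral_two_cells_eq hτ0.le n (hnτ ▸ hgI)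
    _ ≤ 2 * ∫ s in 0..T, ‖g s‖ ^ 2 := by
        rw [hnτ, two_mul]
        gcongr
        exact intervalIntegral.integral_mono_interval le_rfl (le_max_right _ _)
          (max_le (by nlinarith) hT.le) (ae_of_all _ fun u => sq_nonneg ‖g u‖) hgI

/-- First inequality of Lemma 11 of the paper (with explicit constant 2): the discrete
time-difference quotients of the local averages of `f` are controlled in a discrete
L²-in-time norm by the L² norm of the derivative `g`. -/
theorem discrete_difference_quotient_estimate
    {E : Type*} [NormedAddCommGroup E] [NormedSpace ℝ E] [CompleteSpace E]
    (T : ℝ) (hT : 0 < T) (n : ℕ) (hn : 1 ≤ n) (τ : ℝ) (hτ : τ = T / n)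
    (g : ℝ → E) (hg_meas : StronglyMeasurable g)
    (hg_int : IntegrableOn (fun s => ‖g s‖ ^ 2) (Set.Ioc 0 T))
    (f0 : E) (f : ℝ → E) (hf : ∀ t, f t = f0 + ∫ s in (0:ℝ)..t, g s)
    (fτ : ℕ → E) (hfτ0 : fτ 0 = f0)
    (hfτ : ∀ k : ℕ, 1 ≤ k → k ≤ n →
      fτ k = (1 / τ) • ∫ t in (((k : ℝ) - 1) * τ)..((k : ℝ) * τ), f t) :
    ∑ k ∈ Finset.Icc 1 n, τ * ‖(1 / τ) • (fτ k - fτ (k - 1))‖ ^ 2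
      ≤ 2 * ∫ s in (0:ℝ)..T, ‖g s‖ ^ 2 :=
  discrete_difference_quotient_estimate_general T hT n τ hτ g hg_meas hg_int f0 f hf fτ hfτ0 hfτ
end

section
/- With E, T, n, τ, g, f₀, f and the averaged interpolants f_τ^k as in the context, the initial-step estimate ‖f_τ^1 − f₀‖² ≤ τ · ∫_0^τ ‖g(s)‖² ds holds. -/
/-!
`f_τ^1 - f₀` is the mean over `[0, τ]` of `t ↦ ∫_0^t g`, and each of these primitives has norm at
most `∫_0^τ ‖g‖`. Squaring, Cauchy–Schwarz (Jensen for `x ↦ x²`) bounds `(∫_0^τ ‖g‖)²` by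
`τ ∫_0^τ ‖g‖²`.
-/

open MeasureTheory Set

section

variable {E : Type*} [NormedAddCommGroup E] [NormedSpace ℝ E]

theorem sq_intervalIntegral_le_mul_integral_sq {φ : ℝ → ℝ} {a b : ℝ} (hab : a ≤ b)
    (hφ : IntervalIntegrable φ volume a b)
    (hφ2 : IntervalIntegrable (fun x => φ x ^ 2) volume a b) :
    (∫ x in a..b, φ x) ^ 2 ≤ (b - a) * ∫ x in a..b, φ x ^ 2 := by
  rcases hab.eq_or_lt with rfl | hab
  · simp
  have hba : 0 < b - a := sub_pos.2 hab
  have jensen : (⨍ x in a..b, φ x) ^ 2 ≤ ⨍ x in a..b, φ x ^ 2 :=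
    even_two.convexOn_pow.map_set_average_le (continuousOn_pow 2) isClosed_univ
      (by simp [hba.ne']) (by simp) (by simp) hφ.def' hφ2.def'
  rw [interval_average_eq_div, interval_average_eq_div, div_pow,
    div_le_div_iff₀ (by positivity) hba] at jensen
  nlinarith

theorem norm_primitive_le_integral_norm {g : ℝ → E} {a b t : ℝ} (ht : t ∈ Icc a b)
    (hg : IntervalIntegrable g volume a b) :
    ‖∫ s in a..t, g s‖ ≤ ∫ s in a..b, ‖g s‖ :=
  (intervalIntegral.norm_integral_le_integral_norm ht.1).trans <|
    intervalIntegral.integral_mono_interval le_rfl ht.1 ht.2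
      (Filter.Eventually.of_forall fun _ => norm_nonneg _) hg.norm

theorem norm_interval_average_sub_le [CompleteSpace E] {f : ℝ → E} {a b C : ℝ} (x₀ : E)
    (hab : a < b) (hf : IntervalIntegrable f volume a b) (hC : ∀ t ∈ Ioc a b, ‖f t - x₀‖ ≤ C) :
    ‖(⨍ t in a..b, f t) - x₀‖ ≤ C := by
  have hba : 0 < b - a := sub_pos.2 hab
  have hsub : (⨍ t in a..b, f t) - x₀ = (b - a)⁻¹ • ∫ t in a..b, (f t - x₀) := by
    rw [interval_average_eq, intervalIntegral.integral_sub hf intervalIntegrable_const,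
      intervalIntegral.integral_const, smul_sub, smul_smul, inv_mul_cancel₀ hba.ne', one_smul]
  have hbound : ‖∫ t in a..b, (f t - x₀)‖ ≤ C * |b - a| :=
    intervalIntegral.norm_integral_le_of_norm_le_const fun t ht =>
      hC t (by rwa [uIoc_of_le hab.le] at ht)
  rw [abs_of_pos hba] at hbound
  rw [hsub, norm_smul, Real.norm_of_nonneg (inv_nonneg.2 hba.le), inv_mul_le_iff₀ hba]
  linarith

theorem norm_interval_average_primitive_sub_le [CompleteSpace E] {f g : ℝ → E} {a b : ℝ} {x₀ : E}
    (hab : a < b) (hg : IntervalIntegrable g volume a b)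
    (hf : ∀ t ∈ Icc a b, f t = x₀ + ∫ s in a..t, g s) :
    ‖(⨍ t in a..b, f t) - x₀‖ ≤ ∫ s in a..b, ‖g s‖ := by
  have hprim : ContinuousOn (fun t => x₀ + ∫ s in a..t, g s) (Icc a b) := by
    have := intervalIntegral.continuousOn_primitive_interval' hg left_mem_uIcc
    rw [uIcc_of_le hab.le] at this
    exact continuousOn_const.add this
  have hfi : IntervalIntegrable f volume a b :=
    (hprim.congr hf).intervalIntegrable_of_Icc hab.le
  refine norm_interval_average_sub_le x₀ hab hfi fun t ht => ?_
  rw [hf t (Ioc_subset_Icc_self ht), add_sub_cancel_left]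
  exact norm_primitive_le_integral_norm (Ioc_subset_Icc_self ht) hg

end

theorem initial_step_interpolant_estimate_general
    {E : Type*} [NormedAddCommGroup E] [NormedSpace ℝ E] [CompleteSpace E]
    (T : ℝ) (hT : 0 < T) (n : ℕ) (hn : 1 ≤ n) (τ : ℝ) (hτ : τ = T / n)
    (g : ℝ → E) (hg_meas : StronglyMeasurable g)
    (hg_int : IntegrableOn (fun s => ‖g s‖ ^ 2) (Set.Ioc 0 T))
    (f0 : E) (f : ℝ → E) (hf : ∀ t, f t = f0 + ∫ s in (0:ℝ)..t, g s)
    (fτ : ℕ → E)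
    (hfτ : ∀ k : ℕ, 1 ≤ k → k ≤ n →
      fτ k = (1 / τ) • ∫ t in (((k : ℝ) - 1) * τ)..((k : ℝ) * τ), f t) :
    ‖fτ 1 - f0‖ ^ 2 ≤ τ * ∫ s in (0:ℝ)..τ, ‖g s‖ ^ 2 := by
  have hn' : (1 : ℝ) ≤ n := by exact_mod_cast hn
  have hτ_pos : 0 < τ := hτ ▸ div_pos hT (by linarith)
  have hτ_le : τ ≤ T := hτ ▸ div_le_self hT.le hn'
  have hg_sq : IntegrableOn (fun s => ‖g s‖ ^ 2) (Ioc 0 τ) :=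
    hg_int.mono_set (Ioc_subset_Ioc_right hτ_le)
  have hg : IntegrableOn g (Ioc 0 τ) :=
    ((memLp_two_iff_integrable_sq_norm hg_meas.aestronglyMeasurable).2 hg_sq).integrable
      one_le_two
  rw [← intervalIntegrable_iff_integrableOn_Ioc_of_le hτ_pos.le] at hg_sq hg
  have hfτ1 : fτ 1 = ⨍ t in 0..τ, f t := by
    rw [interval_average_eq, sub_zero, ← one_div]
    simpa using hfτ 1 le_rfl hn
  calc ‖fτ 1 - f0‖ ^ 2 ≤ (∫ s in (0:ℝ)..τ, ‖g s‖) ^ 2 := by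
        gcongr
        rw [hfτ1]
        exact norm_interval_average_primitive_sub_le hτ_pos hg fun t _ => hf t
    _ ≤ (τ - 0) * ∫ s in (0:ℝ)..τ, ‖g s‖ ^ 2 :=
        sq_intervalIntegral_le_mul_integral_sq hτ_pos.le hg.norm hg_sq
    _ = τ * ∫ s in (0:ℝ)..τ, ‖g s‖ ^ 2 := by rw [sub_zero]

/-- Initial-step estimate in Lemma 11 of the paper:
`‖f_τ^1 − f₀‖² ≤ τ ∫_0^τ ‖g(s)‖² ds`. -/
theorem initial_step_interpolant_estimate
    {E : Type*} [NormedAddCommGroup E] [NormedSpace ℝ E] [CompleteSpace E]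
    (T : ℝ) (hT : 0 < T) (n : ℕ) (hn : 1 ≤ n) (τ : ℝ) (hτ : τ = T / n)
    (g : ℝ → E) (hg_meas : StronglyMeasurable g)
    (hg_int : IntegrableOn (fun s => ‖g s‖ ^ 2) (Set.Ioc 0 T))
    (f0 : E) (f : ℝ → E) (hf : ∀ t, f t = f0 + ∫ s in (0:ℝ)..t, g s)
    (fτ : ℕ → E) (hfτ0 : fτ 0 = f0)
    (hfτ : ∀ k : ℕ, 1 ≤ k → k ≤ n →
      fτ k = (1 / τ) • ∫ t in (((k : ℝ) - 1) * τ)..((k : ℝ) * τ), f t) :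
    ‖fτ 1 - f0‖ ^ 2 ≤ τ * ∫ s in (0:ℝ)..τ, ‖g s‖ ^ 2 :=
  initial_step_interpolant_estimate_general T hT n hn τ hτ g hg_meas hg_int f0 f hf fτ hfτ
end

section
/- Let H be a real inner product space, let j ≥ 1 be an integer, let τ > 0 and δ > 0, and let f_1, …, f_j and u_0, u_1, …, u_j be elements of H. Then: Σ_{k=1}^j ⟨f_k, u_k − u_{k−1}⟩ ≤ Σ_{k=1}^{j−1} ( (1/(2τ))‖f_{k+1} − f_k‖² + (τ/2)‖u_k‖² ) + (δ/2)‖u_j‖² + (1/(2δ))‖f_j‖² + ‖f_1‖·‖u_0‖. -/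
/-!
Abel summation moves the differences from `u` onto `f`, leaving the boundary terms
`⟪f j, u j⟫ - ⟪f 1, u 0⟫`; each remaining inner product is split by Cauchy–Schwarz and
Young's inequality `ab ≤ a²/(2c) + c b²/2`, with `c = τ` in the sum and `c = δ` at `k = j`.
-/

open scoped RealInnerProductSpace

open Finset

section

variable {H : Type*} [NormedAddCommGroup H] [InnerProductSpace ℝ H]

theorem real_inner_le_young (x y : H) {c : ℝ} (hc : 0 < c) :
    ⟪x, y⟫ ≤ 1 / (2 * c) * ‖x‖ ^ 2 + c / 2 * ‖y‖ ^ 2 := by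
  have young : ‖x‖ * ‖y‖ ≤ 1 / (2 * c) * ‖x‖ ^ 2 + c / 2 * ‖y‖ ^ 2 := by
    have gap : 1 / (2 * c) * ‖x‖ ^ 2 + c / 2 * ‖y‖ ^ 2 - ‖x‖ * ‖y‖
        = (‖x‖ - c * ‖y‖) ^ 2 / (2 * c) := by
      field_simp
      ring
    have : 0 ≤ (‖x‖ - c * ‖y‖) ^ 2 / (2 * c) := by positivity
    linarith
  exact (real_inner_le_norm x y).trans young

theorem neg_real_inner_sub_le_young (x x' y : H) {c : ℝ} (hc : 0 < c) :
    -⟪x' - x, y⟫ ≤ 1 / (2 * c) * ‖x' - x‖ ^ 2 + c / 2 * ‖y‖ ^ 2 := by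
  rw [← inner_neg_left, neg_sub, norm_sub_rev x']
  exact real_inner_le_young _ _ hc

end

theorem sum_Icc_inner_sub_eq_sum_by_parts {𝕜 E : Type*} [RCLike 𝕜] [NormedAddCommGroup E]
    [InnerProductSpace 𝕜 E] (f u : ℕ → E) {j : ℕ} (hj : 1 ≤ j) :
    ∑ k ∈ Icc 1 j, inner 𝕜 (f k) (u k - u (k - 1))
      = inner 𝕜 (f j) (u j) - inner 𝕜 (f 1) (u 0)
        - ∑ k ∈ Icc 1 (j - 1), inner 𝕜 (f (k + 1) - f k) (u k) := by
  induction j, hj using Nat.le_induction with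
  | base => simp [inner_sub_right]
  | succ n hn ih =>
    obtain ⟨m, rfl⟩ : ∃ m, n = m + 1 := ⟨n - 1, by omega⟩
    rw [sum_Icc_succ_top (by omega), ih, Nat.add_sub_cancel, Nat.add_sub_cancel,
      sum_Icc_succ_top (by omega : 1 ≤ m + 1)]
    simp only [inner_sub_right, inner_sub_left]
    ring

/-- Estimate (eq. 54) of the paper, obtained from summation by parts, Cauchy–Schwarz
and Young's inequality. -/
theorem summation_by_parts_estimate
    {H : Type*} [NormedAddCommGroup H] [InnerProductSpace ℝ H]
    (j : ℕ) (hj : 1 ≤ j) (τ δ : ℝ) (hτ : 0 < τ) (hδ : 0 < δ) (f u : ℕ → H) :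
    ∑ k ∈ Finset.Icc 1 j, ⟪f k, u k - u (k - 1)⟫
      ≤ ∑ k ∈ Finset.Icc 1 (j - 1),
          ((1 / (2 * τ)) * ‖f (k + 1) - f k‖ ^ 2 + (τ / 2) * ‖u k‖ ^ 2)
        + (δ / 2) * ‖u j‖ ^ 2 + (1 / (2 * δ)) * ‖f j‖ ^ 2 + ‖f 1‖ * ‖u 0‖ := by
  rw [sum_Icc_inner_sub_eq_sum_by_parts f u hj]
  have last : ⟪f j, u j⟫ ≤ 1 / (2 * δ) * ‖f j‖ ^ 2 + δ / 2 * ‖u j‖ ^ 2 :=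
    real_inner_le_young _ _ hδ
  have first : -⟪f 1, u 0⟫ ≤ ‖f 1‖ * ‖u 0‖ :=
    (neg_le_abs _).trans (abs_real_inner_le_norm _ _)
  have middle : -∑ k ∈ Icc 1 (j - 1), ⟪f (k + 1) - f k, u k⟫
      ≤ ∑ k ∈ Icc 1 (j - 1), (1 / (2 * τ) * ‖f (k + 1) - f k‖ ^ 2 + τ / 2 * ‖u k‖ ^ 2) := by
    rw [← sum_neg_distrib]
    exact sum_le_sum fun k _ ↦ neg_real_inner_sub_le_young _ _ _ hτ
  linarith
end

section
/- Let ψ : M₃(ℝ) → ℝ (a function on 3×3 real matrices) be twice continuously differentiable in a neighborhood of the identity matrix I, and assume ψ is frame-indifferent: ψ(QF) = ψ(F) for every rotation Q (3×3 real matrix with QᵀQ = I and det Q = 1) and every F ∈ M₃(ℝ). Identify the first derivative of ψ at I with the matrix S ∈ M₃(ℝ) via the Frobenius inner product ⟨A, B⟩ = tr(AᵀB) (so ⟨S, H⟩ = Dψ(I)[H]), and identify the second derivative with the linear map 𝔸 : M₃(ℝ) → M₃(ℝ) (so ⟨𝔸[H], G⟩ = D²ψ(I)[H, G]). Then for every H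 ∈ M₃(ℝ), writing E = (H + Hᵀ)/2 and sym(A) = (A + Aᵀ)/2: 𝔸[H] = sym(𝔸[E]) + H·S − sym(E·S). -/
/-!
Rotating a deformation by `exp (t • W)`, `W` skew, does not change `ψ`; differentiating in `t`
gives `Dψ(F)[W F] = 0` for every `F` near the identity. At `F = 1` this says that `S` is
orthogonal to the skew matrices, and differentiating once more in `F` gives
`⟨𝔸[H], W⟩ = -⟨S, W H⟩`. Together with the symmetry of `D²ψ(1)` these relations determine
`𝔸` on skew matrices (`𝔸[W] = W S`) and the skew part of `𝔸[E]` for symmetric `E`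
(it equals the skew part of `E S`), which is the formula.
-/

open Matrix Filter Topology NormedSpace

attribute [local instance] Matrix.normedAddCommGroup Matrix.normedSpace

theorem fderiv_fderiv_apply_add_fderiv_apply_eq_zero {𝕜 E F : Type*} [NontriviallyNormedField 𝕜]
    [NormedAddCommGroup E] [NormedSpace 𝕜 E] [NormedAddCommGroup F] [NormedSpace 𝕜 F]
    {f : E → F} {x : E} (L : E →L[𝕜] E) (hf : DifferentiableAt 𝕜 (fderiv 𝕜 f) x)
    (hL : ∀ᶠ y in 𝓝 x, fderiv 𝕜 f y (L y) = 0) (v : E) :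
    fderiv 𝕜 (fderiv 𝕜 f) x v (L x) + fderiv 𝕜 f x (L v) = 0 := by
  have hD : HasFDerivAt (fun y => fderiv 𝕜 f y (L y)) (0 : E →L[𝕜] F) x :=
    (hasFDerivAt_const 0 x).congr_of_eventuallyEq hL
  have := congrArg (· v) ((hf.hasFDerivAt.clm_apply L.hasFDerivAt).unique hD)
  rw [add_comm]
  simpa using this

namespace Matrix

section TraceRelations

variable {n R : Type*} [Fintype n] [CommRing R]

theorem transpose_eq_of_trace_transpose_mul_skew_eq_zero {Z : Matrix n n R}
    (hZ : ∀ W : Matrix n n R, Wᵀ = -W → trace (Zᵀ * W) = 0) : Zᵀ = Z := by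
  refine ext_iff_trace_mul_right.mpr fun G => ?_
  have hG : (G - Gᵀ)ᵀ = -(G - Gᵀ) := by simp
  have h := hZ _ hG
  calc trace (Zᵀ * G) = trace (Zᵀ * Gᵀ) := by
        rw [Matrix.mul_sub, trace_sub] at h; exact sub_eq_zero.mp h
    _ = trace (Z * G) := by rw [← trace_transpose (Z * G), transpose_mul, trace_mul_comm]

variable {S : Matrix n n R} {A : Matrix n n R →ₗ[R] Matrix n n R}

theorem apply_skew_eq_mul
    (hsymm : ∀ H G, trace ((A H)ᵀ * G) = trace ((A G)ᵀ * H))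
    (hA : ∀ H W, Wᵀ = -W → trace ((A H)ᵀ * W) = -trace (Sᵀ * (W * H)))
    {W : Matrix n n R} (hW : Wᵀ = -W) : A W = W * S := by
  refine transpose_inj.mp (ext_iff_trace_mul_right.mpr fun G => ?_)
  rw [hsymm, hA G W hW, transpose_mul, hW, Matrix.mul_assoc, Matrix.neg_mul,
    Matrix.mul_neg, trace_neg]

theorem apply_sub_transpose_of_symm
    (hS : ∀ W : Matrix n n R, Wᵀ = -W → trace (Sᵀ * W) = 0)
    (hA : ∀ H W, Wᵀ = -W → trace ((A H)ᵀ * W) = -trace (Sᵀ * (W * H)))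
    {E : Matrix n n R} (hE : Eᵀ = E) : A E - (A E)ᵀ = E * S - (E * S)ᵀ := by
  have hsym : (A E - E * S)ᵀ = A E - E * S := by
    refine transpose_eq_of_trace_transpose_mul_skew_eq_zero fun W hW => ?_
    have hWE : (W * E + E * W)ᵀ = -(W * E + E * W) := by
      simp only [transpose_add, transpose_mul, hW, hE, Matrix.mul_neg, Matrix.neg_mul]; abel
    have h := hS _ hWE
    rw [Matrix.mul_add, trace_add] at h
    rw [transpose_sub, Matrix.sub_mul, trace_sub, hA E W hW, transpose_mul, hE,
      Matrix.mul_assoc]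
    linear_combination -h
  rw [transpose_sub] at hsym
  exact sub_eq_sub_iff_sub_eq_sub.mpr hsym.symm

end TraceRelations

section Symmetrization

variable {n R : Type*} [Fintype n] [Field R] [CharZero R]

theorem apply_eq_symmetrize_add_mul_sub_symmetrize {S : Matrix n n R}
    {A : Matrix n n R →ₗ[R] Matrix n n R}
    (hS : ∀ W : Matrix n n R, Wᵀ = -W → trace (Sᵀ * W) = 0)
    (hsymm : ∀ H G, trace ((A H)ᵀ * G) = trace ((A G)ᵀ * H))
    (hA : ∀ H W, Wᵀ = -W → trace ((A H)ᵀ * W) = -trace (Sᵀ * (W * H))) (H : Matrix n n R) :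
    A H = (2⁻¹ : R) • (A ((2⁻¹ : R) • (H + Hᵀ)) + (A ((2⁻¹ : R) • (H + Hᵀ)))ᵀ)
        + H * S
        - (2⁻¹ : R) • ((((2⁻¹ : R) • (H + Hᵀ)) * S) + ((((2⁻¹ : R) • (H + Hᵀ)) * S))ᵀ) := by
  set E := (2⁻¹ : R) • (H + Hᵀ) with hEdef
  set W := (2⁻¹ : R) • (H - Hᵀ) with hWdef
  have hE : Eᵀ = E := by rw [hEdef, transpose_smul, transpose_add, transpose_transpose, add_comm]
  have hW : Wᵀ = -W := by
    rw [hWdef, transpose_smul, transpose_sub, transpose_transpose, ← smul_neg, neg_sub]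
  have hH : H = E + W := by module
  have hAE : (A E)ᵀ = A E - (E * S - (E * S)ᵀ) := by
    rw [← apply_sub_transpose_of_symm hS hA hE]; abel
  have hHS : H * S = E * S + W * S := by rw [hH, Matrix.add_mul]
  calc A H = A E + W * S := by rw [hH, map_add, apply_skew_eq_mul hsymm hA hW]
    _ = _ := by rw [hAE, hHS]; module

end Symmetrization

section Rotations

variable {n : Type*} [Fintype n] [DecidableEq n]

def IsFrameIndifferent {E : Type*} (ψ : Matrix n n ℝ → E) : Prop :=
  ∀ Q F : Matrix n n ℝ, Qᵀ * Q = 1 → Q.det = 1 → ψ (Q * F) = ψ F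

theorem hasDerivAt_exp_smul_mul (W F : Matrix n n ℝ) :
    HasDerivAt (fun t : ℝ => exp (t • W) * F) (W * F) 0 := by
  open scoped Norms.Operator in
  have := FiniteDimensional.complete ℝ (Matrix n n ℝ)
  open scoped Norms.Operator in
  have h := (hasDerivAt_exp_smul_const' (𝕂 := ℝ) W 0).mul_const F
  rwa [zero_smul, exp_zero, Matrix.mul_one] at h

theorem transpose_exp_mul_exp_of_skew {W : Matrix n n ℝ} (hW : Wᵀ = -W) :
    (exp W)ᵀ * exp W = 1 := by
  rw [← exp_transpose, hW, ← exp_add_of_commute _ _ (Commute.refl W).neg_left, neg_add_cancel,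
    exp_zero]

theorem det_exp_of_skew {W : Matrix n n ℝ} (hW : Wᵀ = -W) : (exp W).det = 1 := by
  have hsq : (exp W).det ^ 2 = 1 := by
    rw [← det_one (n := n), ← transpose_exp_mul_exp_of_skew hW, det_mul, det_transpose, sq]
  have hnonneg : 0 ≤ (exp W).det := by
    rw [show W = 2 • ((2⁻¹ : ℝ) • W) by module, exp_nsmul, det_pow]
    positivity
  nlinarith

theorem IsFrameIndifferent.fderiv_apply_skew_mul_eq_zero {E : Type*} [NormedAddCommGroup E]
    [NormedSpace ℝ E] {ψ : Matrix n n ℝ → E} (hψ : IsFrameIndifferent ψ) {F W : Matrix n n ℝ}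
    (hF : DifferentiableAt ℝ ψ F) (hW : Wᵀ = -W) : fderiv ℝ ψ F (W * F) = 0 := by
  have hcomp := hF.hasFDerivAt.comp_hasDerivAt_of_eq (0 : ℝ) (hasDerivAt_exp_smul_mul W F)
    (by rw [zero_smul, exp_zero, Matrix.one_mul])
  have hconst : ψ ∘ (fun t : ℝ => exp (t • W) * F) = fun _ => ψ F := by
    funext t
    have htW : (t • W)ᵀ = -(t • W) := by rw [transpose_smul, hW, smul_neg]
    exact hψ _ F (transpose_exp_mul_exp_of_skew htW) (det_exp_of_skew htW)
  rw [hconst] at hcomp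
  exact hcomp.unique (hasDerivAt_const 0 (ψ F))

theorem IsFrameIndifferent.fderiv_fderiv_apply_add_fderiv_apply_skew_mul_eq_zero
    {E : Type*} [NormedAddCommGroup E] [NormedSpace ℝ E] {ψ : Matrix n n ℝ → E}
    (hψ : IsFrameIndifferent ψ) {F₀ W : Matrix n n ℝ} (hψF₀ : ContDiffAt ℝ 2 ψ F₀)
    (hW : Wᵀ = -W) (H : Matrix n n ℝ) :
    fderiv ℝ (fderiv ℝ ψ) F₀ H (W * F₀) + fderiv ℝ ψ F₀ (W * H) = 0 :=
  fderiv_fderiv_apply_add_fderiv_apply_eq_zero (LinearMap.mulLeft ℝ W).toContinuousLinearMap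
    ((hψF₀.fderiv_right (m := 1) (by norm_num)).differentiableAt (by norm_num))
    ((hψF₀.eventually (by simp)).mono fun _ hF =>
      hψ.fderiv_apply_skew_mul_eq_zero (hF.differentiableAt (by norm_num)) hW) H

end Rotations

end Matrix

/-- Representation formula (eq. 36) for the second derivative of a frame-indifferent
stored energy at the identity: `𝔸[H] = sym(𝔸[E]) + H·S − sym(E·S)` with
`E = (H + Hᵀ)/2`, where `S` represents the first derivative and `𝔸` the second
derivative of `ψ` at the identity via the Frobenius inner product. -/
theorem frame_indifference_second_derivative_representation
    (ψ : Matrix (Fin 3) (Fin 3) ℝ → ℝ)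
    (hψ : ∃ U : Set (Matrix (Fin 3) (Fin 3) ℝ),
      IsOpen U ∧ (1 : Matrix (Fin 3) (Fin 3) ℝ) ∈ U ∧ ContDiffOn ℝ 2 ψ U)
    (hframe : ∀ Q F : Matrix (Fin 3) (Fin 3) ℝ,
      Qᵀ * Q = 1 → Q.det = 1 → ψ (Q * F) = ψ F)
    (S : Matrix (Fin 3) (Fin 3) ℝ)
    (hS : ∀ H : Matrix (Fin 3) (Fin 3) ℝ,
      Matrix.trace (Sᵀ * H) = fderiv ℝ ψ 1 H)
    (A : Matrix (Fin 3) (Fin 3) ℝ →ₗ[ℝ] Matrix (Fin 3) (Fin 3) ℝ)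
    (hA : ∀ H G : Matrix (Fin 3) (Fin 3) ℝ,
      Matrix.trace ((A H)ᵀ * G) = fderiv ℝ (fderiv ℝ ψ) 1 H G) :
    ∀ H : Matrix (Fin 3) (Fin 3) ℝ,
      A H = (2⁻¹ : ℝ) • (A ((2⁻¹ : ℝ) • (H + Hᵀ)) + (A ((2⁻¹ : ℝ) • (H + Hᵀ)))ᵀ)
        + H * S
        - (2⁻¹ : ℝ) • ((((2⁻¹ : ℝ) • (H + Hᵀ)) * S) + ((((2⁻¹ : ℝ) • (H + Hᵀ)) * S))ᵀ) := by
  intro H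
  obtain ⟨U, hU, h1U, hψU⟩ := hψ
  have hψ1 : ContDiffAt ℝ 2 ψ 1 := hψU.contDiffAt (hU.mem_nhds h1U)
  refine apply_eq_symmetrize_add_mul_sub_symmetrize (fun W hW => ?_)
    (fun H G => ?_) (fun H W hW => ?_) H
  · simpa [hS] using
      IsFrameIndifferent.fderiv_apply_skew_mul_eq_zero hframe
        (hψ1.differentiableAt (by norm_num)) hW
  · rw [hA, hA]
    exact hψ1.isSymmSndFDerivAt (by simp) H G
  · have h := IsFrameIndifferent.fderiv_fderiv_apply_add_fderiv_apply_skew_mul_eq_zero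
      hframe hψ1 hW H
    rw [Matrix.mul_one] at h
    rw [hA, hS]
    exact eq_neg_of_add_eq_zero_left h
end
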